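/- Let K ≥ 3, τ ∈ ℝ, and let (μ_k)_{k=1}^K be a concave sequence of reals. Consider the dyadic binary tree on [K] and define the set of good nodes Z = { v : μ_{v(l)} > τ or μ_{v(m)} > τ or μ_{v(r)} > τ }. Then Z is a consecutive tree: there is at most one node v ∈ Z with P(v) ∉ Z, and if z_root denotes this node when it exists (and the root of the whole tree otherwise, in which case the root belongs to Z whenever Z is nonempty), then every node q ∈ Z with q ≠ z_root satisfies P(q) ∈ Z. -/

import Mathlib

/-- A node of the dyadic binary tree on `[K]` is a triple `(L, M, R)` of (1-based) arm
indices. -/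
abbrev TreeNode := ℕ × ℕ × ℕ

/-- Root of the dyadic binary tree on `[K]`. -/
def treeRoot (K : ℕ) : TreeNode := (1, (1 + K) / 2, K)

/-- Left child of a node `(L, M, R)`: `(L, ⌊(L+M)/2⌋, M)`. -/
def leftChild (v : TreeNode) : TreeNode := (v.1, (v.1 + v.2.1) / 2, v.2.1)

/-- Right child of a node `(L, M, R)`: `(M, ⌊(M+R)/2⌋, R)`. -/
def rightChild (v : TreeNode) : TreeNode := (v.2.1, (v.2.1 + v.2.2) / 2, v.2.2)

/-- A node `(L, M, R)` is a leaf when `R = L + 1`. -/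
def IsLeaf (v : TreeNode) : Prop := v.2.2 = v.1 + 1

/-- `Desc u v d`: `v` belongs to the subtree `ST(u)` rooted at `u`, at relative depth `d`
(children are only taken at non-leaf nodes). -/
inductive Desc : TreeNode → TreeNode → ℕ → Prop
  | refl (u : TreeNode) : Desc u u 0
  | left {u v : TreeNode} {d : ℕ} : Desc u v d → ¬IsLeaf v → Desc u (leftChild v) (d + 1)
  | right {u v : TreeNode} {d : ℕ} : Desc u v d → ¬IsLeaf v → Desc u (rightChild v) (d + 1)

/-- A node of the dyadic tree on `[K]`: a descendant of the root. -/
def IsNode (K : ℕ) (v : TreeNode) : Prop := ∃ d, Desc (treeRoot K) v d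

/-- `w` is a child of the (non-leaf) node `v`; equivalently, `v = P(w)`. -/
def ChildOf (v w : TreeNode) : Prop :=
  ¬IsLeaf v ∧ (w = leftChild v ∨ w = rightChild v)

/-- The set of good nodes: nodes of the tree with at least one of its three arms having
mean above the threshold. -/
def goodNodes (K : ℕ) (τ : ℝ) (μ : ℕ → ℝ) : Set TreeNode :=
  {v | IsNode K v ∧ (τ < μ v.1 ∨ τ < μ v.2.1 ∨ τ < μ v.2.2)}

/-- A candidate root of the consecutive tree `Z`: a good node whose parent is not good. -/
def IsZRoot (K : ℕ) (τ : ℝ) (μ : ℕ → ℝ) (v : TreeNode) : Prop :=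
  v ∈ goodNodes K τ μ ∧ ∃ p, IsNode K p ∧ ChildOf p v ∧ p ∉ goodNodes K τ μ

/-!
A Z-root `v` has both endpoints at or below `τ` and its midpoint above `τ`, because its endpoints
are arms of its parent, which is not good. A concave sequence is quasiconcave, so the midpoint
of any other Z-root `w` lies strictly between the endpoints of `v`, and vice versa. The intervals
of the dyadic tree form a laminar family, so `v` and `w` are then comparable; but a proper
descendant of `v` lies on one side of the midpoint of `v`, hence `v = w`. The other two
claims are immediate from the definition of a Z-root; for the last, walk up the tree from a good
node.
-/

section Quasiconcave

lemma exists_succ_lt_of_lt {α : Type*} [LinearOrder α] {f : ℕ → α} {a b : ℕ} (hab : a ≤ b)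
    (h : f b < f a) : ∃ i ∈ Set.Ico a b, f (i + 1) < f i := by
  induction b, hab using Nat.le_induction with
  | base => exact absurd h (lt_irrefl _)
  | succ n han ih =>
    by_cases hdrop : f (n + 1) < f n
    · exact ⟨n, ⟨han, n.lt_succ_self⟩, hdrop⟩
    · obtain ⟨i, ⟨hai, hin⟩, hi⟩ := ih ((not_lt.1 hdrop).trans_lt h)
      exact ⟨i, ⟨hai, hin.trans n.lt_succ_self⟩, hi⟩

lemma exists_lt_succ_of_lt {α : Type*} [LinearOrder α] {f : ℕ → α} {a b : ℕ} (hab : a ≤ b)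
    (h : f a < f b) : ∃ i ∈ Set.Ico a b, f i < f (i + 1) :=
  exists_succ_lt_of_lt (α := αᵒᵈ) hab h

variable {K : ℕ} {μ : ℕ → ℝ}
  (hconc : ∀ i : ℕ, 1 ≤ i → i + 2 ≤ K → μ i + μ (i + 2) ≤ 2 * μ (i + 1))
include hconc

lemma sub_le_sub_of_concave {i j : ℕ} (hi : 1 ≤ i) (hij : i ≤ j) (hj : j + 1 ≤ K) :
    μ (j + 1) - μ j ≤ μ (i + 1) - μ i := by
  induction j, hij using Nat.le_induction with
  | base => exact le_rfl
  | succ n hin ih =>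
    have := hconc n (hi.trans hin) hj
    linarith [ih (by omega)]

lemma min_le_of_concave {a b c : ℕ} (ha : 1 ≤ a) (hab : a ≤ b) (hbc : b ≤ c) (hc : c ≤ K) :
    min (μ a) (μ c) ≤ μ b := by
  by_contra! hb
  obtain ⟨i, ⟨hai, hib⟩, hdrop⟩ := exists_succ_lt_of_lt hab (lt_of_lt_of_le hb (min_le_left _ _))
  obtain ⟨j, ⟨hbj, hjc⟩, hrise⟩ := exists_lt_succ_of_lt hbc (lt_of_lt_of_le hb (min_le_right _ _))
  have := sub_le_sub_of_concave hconc (ha.trans hai) (by omega : i ≤ j) (by omega)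
  linarith

end Quasiconcave

section DyadicTree

def IsMidTriple (v : TreeNode) : Prop :=
  v.1 < v.2.2 ∧ v.2.1 = (v.1 + v.2.2) / 2

lemma isMidTriple_treeRoot {K : ℕ} (hK : 2 ≤ K) : IsMidTriple (treeRoot K) := by
  simp only [IsMidTriple, treeRoot, and_true]
  omega

variable {a u v : TreeNode} {d e : ℕ}

lemma IsMidTriple.leftChild (hv : IsMidTriple v) (hl : ¬IsLeaf v) :
    IsMidTriple (leftChild v) := by
  simp only [IsMidTriple, IsLeaf, _root_.leftChild, and_true] at *
  omega

lemma IsMidTriple.rightChild (hv : IsMidTriple v) : IsMidTriple (rightChild v) := by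
  simp only [IsMidTriple, _root_.rightChild, and_true] at *
  omega

lemma Desc.isMidTriple (h : Desc u v d) (hu : IsMidTriple u) : IsMidTriple v := by
  induction h with
  | refl => exact hu
  | left _ hl ih => exact ih.leftChild hl
  | right _ _ ih => exact ih.rightChild

lemma Desc.subinterval (h : Desc u v d) (hu : IsMidTriple u) : u.1 ≤ v.1 ∧ v.2.2 ≤ u.2.2 := by
  induction h with
  | refl => exact ⟨le_rfl, le_rfl⟩
  | left h _ ih =>
    have := h.isMidTriple hu
    simp only [IsMidTriple, leftChild] at *
    omega
  | right h _ ih =>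
    have := h.isMidTriple hu
    simp only [IsMidTriple, rightChild] at *
    omega

lemma Desc.le_mid_of_leftChild (h : Desc (leftChild a) v e) (ha : IsMidTriple a)
    (hl : ¬IsLeaf a) : v.2.2 ≤ a.2.1 :=
  (h.subinterval (ha.leftChild hl)).2

lemma Desc.mid_le_of_rightChild (h : Desc (rightChild a) v e) (ha : IsMidTriple a) :
    a.2.1 ≤ v.1 :=
  (h.subinterval ha.rightChild).1

lemma Desc.eq_or_exists_childOf (h : Desc u v d) :
    (v = u ∧ d = 0) ∨ ∃ c e, ChildOf u c ∧ Desc c v e ∧ d = e + 1 := by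
  induction h with
  | refl => exact .inl ⟨rfl, rfl⟩
  | left _ hl ih =>
    rcases ih with ⟨rfl, rfl⟩ | ⟨c, e, hc, hcv, rfl⟩
    · exact .inr ⟨_, 0, ⟨hl, .inl rfl⟩, .refl _, rfl⟩
    · exact .inr ⟨c, e + 1, hc, hcv.left hl, rfl⟩
  | right _ hl ih =>
    rcases ih with ⟨rfl, rfl⟩ | ⟨c, e, hc, hcv, rfl⟩
    · exact .inr ⟨_, 0, ⟨hl, .inr rfl⟩, .refl _, rfl⟩
    · exact .inr ⟨c, e + 1, hc, hcv.right hl, rfl⟩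

lemma Desc.eq_of_mid_mem_Ioo (h : Desc u v d) (hu : IsMidTriple u)
    (hmid : u.2.1 ∈ Set.Ioo v.1 v.2.2) : v = u := by
  simp only [Set.mem_Ioo] at hmid
  rcases h.eq_or_exists_childOf with ⟨rfl, -⟩ | ⟨c, e, ⟨hl, rfl | rfl⟩, hcv, -⟩
  · rfl
  · have := hcv.le_mid_of_leftChild hu hl
    omega
  · have := hcv.mid_le_of_rightChild hu
    omega

/-- Laminarity of the dyadic intervals. -/
lemma Desc.desc_or_desc_of_mem_Ioo {u' : TreeNode} {d' : ℕ} (ha : IsMidTriple a)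
    (hu : Desc a u d) (hu' : Desc a u' d') {x : ℕ} (hx : x ∈ Set.Ioo u.1 u.2.2)
    (hx' : x ∈ Set.Ioo u'.1 u'.2.2) : (∃ e, Desc u u' e) ∨ ∃ e, Desc u' u e := by
  induction d generalizing a u u' d' with
  | zero =>
    rcases hu.eq_or_exists_childOf with ⟨rfl, -⟩ | ⟨_, _, _, _, h⟩
    · exact .inl ⟨d', hu'⟩
    · omega
  | succ d ih =>
    rcases hu.eq_or_exists_childOf with ⟨rfl, -⟩ | ⟨c, e, ⟨hl, hc⟩, hcu, he⟩
    · exact .inl ⟨d', hu'⟩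
    obtain rfl : e = d := by omega
    rcases hu'.eq_or_exists_childOf with ⟨rfl, -⟩ | ⟨c', e', ⟨-, hc'⟩, hcu', -⟩
    · exact .inr ⟨_, hu⟩
    simp only [Set.mem_Ioo] at hx hx'
    rcases hc with rfl | rfl <;> rcases hc' with rfl | rfl
    · exact ih (ha.leftChild hl) hcu hcu' hx hx'
    · have := hcu.le_mid_of_leftChild ha hl
      have := hcu'.mid_le_of_rightChild ha
      omega
    · have := hcu.mid_le_of_rightChild ha
      have := hcu'.le_mid_of_leftChild ha hl
      omega
    · exact ih ha.rightChild hcu hcu' hx hx'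

lemma Desc.mem_of_parent_mem {S : Set TreeNode}
    (hS : ∀ p c, (∃ e, Desc u p e) → ChildOf p c → c ∈ S → p ∈ S) (h : Desc u v d)
    (hv : v ∈ S) : u ∈ S := by
  induction h with
  | refl => exact hv
  | left h hl ih => exact ih (hS _ _ ⟨_, h⟩ ⟨hl, .inl rfl⟩ hv)
  | right h hl ih => exact ih (hS _ _ ⟨_, h⟩ ⟨hl, .inr rfl⟩ hv)

end DyadicTree

section GoodNodes

variable {K : ℕ} {τ : ℝ} {μ : ℕ → ℝ} {v w : TreeNode}

lemma IsNode.isMidTriple (hK : 2 ≤ K) (h : IsNode K v) : IsMidTriple v :=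
  h.choose_spec.isMidTriple (isMidTriple_treeRoot hK)

lemma IsNode.subinterval (hK : 2 ≤ K) (h : IsNode K v) : 1 ≤ v.1 ∧ v.2.2 ≤ K :=
  h.choose_spec.subinterval (isMidTriple_treeRoot hK)

lemma IsZRoot.arms (h : IsZRoot K τ μ v) : μ v.1 ≤ τ ∧ τ < μ v.2.1 ∧ μ v.2.2 ≤ τ := by
  obtain ⟨⟨-, hgood⟩, p, hp, ⟨-, hpv⟩, hbad⟩ := h
  simp only [goodNodes, Set.mem_ofPred_eq, not_and, not_or, not_lt] at hbad
  obtain ⟨hp₁, hp₂, hp₃⟩ := hbad hp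
  have hends : μ v.1 ≤ τ ∧ μ v.2.2 ≤ τ := by
    rcases hpv with rfl | rfl
    exacts [⟨hp₁, hp₂⟩, ⟨hp₂, hp₃⟩]
  refine ⟨hends.1, ?_, hends.2⟩
  rcases hgood with h | h | h
  · linarith [hends.1]
  · exact h
  · linarith [hends.2]

/-- Applied with `v = w`, this also places the midpoint of a Z-root strictly inside its own
interval. -/
lemma IsZRoot.mid_mem_Ioo (hK : 2 ≤ K)
    (hconc : ∀ i : ℕ, 1 ≤ i → i + 2 ≤ K → μ i + μ (i + 2) ≤ 2 * μ (i + 1))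
    (hv : IsZRoot K τ μ v) (hw : IsZRoot K τ μ w) : w.2.1 ∈ Set.Ioo v.1 v.2.2 := by
  have hv_mid : IsMidTriple v := hv.1.1.isMidTriple hK
  have hw_mid : IsMidTriple w := hw.1.1.isMidTriple hK
  obtain ⟨hv₁, hvK⟩ := hv.1.1.subinterval hK
  obtain ⟨hw₁, hwK⟩ := hw.1.1.subinterval hK
  obtain ⟨hvL, hvM, hvR⟩ := hv.arms
  have hwM := hw.arms.2.1
  unfold IsMidTriple at hv_mid hw_mid
  constructor
  · by_contra! h
    have := min_le_of_concave hconc (by omega) h (by omega : v.1 ≤ v.2.1) (by omega)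
    linarith [lt_min hwM hvM]
  · by_contra! h
    have := min_le_of_concave hconc (by omega) (by omega : v.2.1 ≤ v.2.2) h (by omega)
    linarith [lt_min hvM hwM]

lemma IsZRoot.unique (hK : 2 ≤ K)
    (hconc : ∀ i : ℕ, 1 ≤ i → i + 2 ≤ K → μ i + μ (i + 2) ≤ 2 * μ (i + 1))
    (hv : IsZRoot K τ μ v) (hw : IsZRoot K τ μ w) : v = w := by
  have hroot := isMidTriple_treeRoot hK
  obtain ⟨dv, hdv⟩ := hv.1.1
  obtain ⟨dw, hdw⟩ := hw.1.1
  rcases hdv.desc_or_desc_of_mem_Ioo hroot hdw (hv.mid_mem_Ioo hK hconc hw)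
      (hw.mid_mem_Ioo hK hconc hw) with ⟨e, hvw⟩ | ⟨e, hwv⟩
  · exact (hvw.eq_of_mid_mem_Ioo (hdv.isMidTriple hroot) (hw.mid_mem_Ioo hK hconc hv)).symm
  · exact hwv.eq_of_mid_mem_Ioo (hdw.isMidTriple hroot) (hv.mid_mem_Ioo hK hconc hw)

end GoodNodes

theorem goodNodes_consecutive_tree
    (K : ℕ) (hK : 3 ≤ K) (τ : ℝ) (μ : ℕ → ℝ)
    (hconc : ∀ i : ℕ, 1 ≤ i → i + 2 ≤ K → μ i + μ (i + 2) ≤ 2 * μ (i + 1)) :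
    (∀ v w, IsZRoot K τ μ v → IsZRoot K τ μ w → v = w) ∧
    (∀ q ∈ goodNodes K τ μ, ¬IsZRoot K τ μ q →
      ∀ p, IsNode K p → ChildOf p q → p ∈ goodNodes K τ μ) ∧
    ((∀ v, ¬IsZRoot K τ μ v) → (∃ v, v ∈ goodNodes K τ μ) →
      treeRoot K ∈ goodNodes K τ μ) := by
  refine ⟨fun v w hv hw => hv.unique (by omega) hconc hw, ?_, ?_⟩
  · intro q hq hq_not p hp hpq
    by_contra hp_bad
    exact hq_not ⟨hq, p, hp, hpq, hp_bad⟩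
  · rintro hno ⟨v, hv⟩
    obtain ⟨d, hd⟩ := hv.1
    refine hd.mem_of_parent_mem (fun p c hp hpc hc => ?_) hv
    by_contra hp_bad
    exact hno c ⟨hc, p, hp, hpc, hp_bad⟩
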